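/- In a group-cograded weak Hopf quasigroup H over a group G, for all p ∈ G one has ε_p^t = ε̃_p^s ∘ S_{p⁻¹} = S_{p⁻¹} ∘ ε̃_{p⁻¹}^t and ε_p^s = ε̃_p^t ∘ S_{p⁻¹} = S_{p⁻¹} ∘ ε̃_{p⁻¹}^s as maps H_e → H_p (precomposing with S_e : H_e → H_e where appropriate). -/

import Mathlib

noncomputable section

open TensorProduct

namespace WHQPaper

variable (k : Type*) [Field k]

/-- `(a ⊗ b) ↦ f a * g b` into the scalars. -/
def sc2 {M N : Type*} [AddCommGroup M] [Module k M] [AddCommGroup N] [Module k N]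
    (f : M →ₗ[k] k) (g : N →ₗ[k] k) : M ⊗[k] N →ₗ[k] k :=
  (LinearMap.mul' k k).comp (TensorProduct.map f g)

/-- `(a ⊗ b) ↦ f a • g b`. -/
def sm2 {M N P : Type*} [AddCommGroup M] [Module k M] [AddCommGroup N] [Module k N]
    [AddCommGroup P] [Module k P] (f : M →ₗ[k] k) (g : N →ₗ[k] P) : M ⊗[k] N →ₗ[k] P :=
  TensorProduct.lift ((LinearMap.lsmul k P).compl₁₂ f g)

/-- `(a ⊗ b) ↦ m (f a) (g b)`. -/
def mu2 {M N A B C : Type*} [AddCommGroup M] [Module k M] [AddCommGroup N] [Module k N]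
    [AddCommGroup A] [Module k A] [AddCommGroup B] [Module k B] [AddCommGroup C] [Module k C]
    (m : A →ₗ[k] B →ₗ[k] C) (f : M →ₗ[k] A) (g : N →ₗ[k] B) : M ⊗[k] N →ₗ[k] C :=
  TensorProduct.lift (m.compl₁₂ f g)

/-- the bilinear map `(a ⊗ b) ↦ (c ⊗ d) ↦ (f a c) ⊗ (g b d)`. -/
def pair2 {A B C D E₁ E₂ : Type*} [AddCommGroup A] [Module k A] [AddCommGroup B] [Module k B]
    [AddCommGroup C] [Module k C] [AddCommGroup D] [Module k D]
    [AddCommGroup E₁] [Module k E₁] [AddCommGroup E₂] [Module k E₂]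
    (f : A →ₗ[k] C →ₗ[k] E₁) (g : B →ₗ[k] D →ₗ[k] E₂) :
    (A ⊗[k] B) →ₗ[k] (C ⊗[k] D) →ₗ[k] (E₁ ⊗[k] E₂) :=
  TensorProduct.lift ((TensorProduct.mapBilinear (RingHom.id k) C D E₁ E₂).compl₁₂ f g)

variable {G : Type*} [Group G]

/-- transport along an equality of indices. -/
def castH (H : G → Type*) [∀ p, AddCommGroup (H p)] [∀ p, Module k (H p)]
    {p q : G} (e : p = q) : H p →ₗ[k] H q where
  toFun x := e ▸ x
  map_add' := by subst e; intros; rfl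
  map_smul' := by subst e; intros; rfl

variable (G)

/-- A group-cograded weak Hopf quasigroup: a family of (not necessarily associative)
unital algebras `(H_p)_{p ∈ G}`, comultiplications `Δ_{p,q} : H_{pq} → H_p ⊗ H_q` which are
coassociative algebra maps, a counit `ε : H_e → k` and an antipode
`S = (S_p : H_p → H_{p⁻¹})`, subject to the axioms of Definition 3.1, together with the
four (co)unital maps `ε^t_p, ε^s_p, ε̃^t_p, ε̃^s_p : H_e → H_p` given by their defining
formulas. -/
structure GCWHQ (H : G → Type*) [∀ p, AddCommGroup (H p)] [∀ p, Module k (H p)] where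
  mul : ∀ p, H p →ₗ[k] H p →ₗ[k] H p
  one : ∀ p, H p
  comul : ∀ p q, H (p * q) →ₗ[k] H p ⊗[k] H q
  counit : H 1 →ₗ[k] k
  antS : ∀ p, H p →ₗ[k] H p⁻¹
  εt : ∀ p, H 1 →ₗ[k] H p
  εs : ∀ p, H 1 →ₗ[k] H p
  εt' : ∀ p, H 1 →ₗ[k] H p
  εs' : ∀ p, H 1 →ₗ[k] H p
  one_mul' : ∀ p (h : H p), mul p (one p) h = h
  mul_one' : ∀ p (h : H p), mul p h (one p) = h
  /-- each `Δ_{p,q}` is multiplicative -/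
  comul_mul : ∀ p q (h g : H (p * q)),
    comul p q (mul (p * q) h g) = pair2 k (mul p) (mul q) (comul p q h) (comul p q g)
  coassoc : ∀ p q r (h : H (p * q * r)),
    (TensorProduct.assoc k (H p) (H q) (H r))
        ((TensorProduct.map (comul p q) LinearMap.id) (comul (p * q) r h))
      = (TensorProduct.map LinearMap.id (comul q r))
          (comul p (q * r) (castH k H (mul_assoc p q r) h))
  counit_left : ∀ p (h : H p),
    (TensorProduct.lid k (H p)) ((TensorProduct.map counit LinearMap.id)
      (comul 1 p (castH k H (one_mul p).symm h))) = h
  counit_right : ∀ p (h : H p),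
    (TensorProduct.rid k (H p)) ((TensorProduct.map LinearMap.id counit)
      (comul p 1 (castH k H (mul_one p).symm h))) = h
  eps_assoc : ∀ g h l : H 1, counit (mul 1 (mul 1 g h) l) = counit (mul 1 g (mul 1 h l))
  /-- `ε(ghl) = ε(gh₁)ε(h₂l)` -/
  eps_weak₁ : ∀ g h l : H 1, counit (mul 1 (mul 1 g h) l)
    = sc2 k (counit ∘ₗ mul 1 g) (counit ∘ₗ (mul 1).flip l)
        (comul 1 1 (castH k H (one_mul (1 : G)).symm h))
  /-- `ε(ghl) = ε(gh₂)ε(h₁l)` -/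
  eps_weak₂ : ∀ g h l : H 1, counit (mul 1 (mul 1 g h) l)
    = sc2 k (counit ∘ₗ (mul 1).flip l) (counit ∘ₗ mul 1 g)
        (comul 1 1 (castH k H (one_mul (1 : G)).symm h))
  /-- (3.1): `(Δ_{p,q} ⊗ id)Δ_{pq,r}(1) = (Δ_{p,q}(1) ⊗ 1_r)(1_p ⊗ Δ_{q,r}(1))` -/
  unit_weak₁ : ∀ p q r, (TensorProduct.map (comul p q) LinearMap.id)
      (comul (p * q) r (one (p * q * r)))
    = pair2 k (pair2 k (mul p) (mul q)) (mul r)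
        ((comul p q (one (p * q))) ⊗ₜ[k] (one r))
        ((TensorProduct.assoc k (H p) (H q) (H r)).symm
          ((one p) ⊗ₜ[k] (comul q r (one (q * r)))))
  /-- (3.2): `(Δ_{p,q} ⊗ id)Δ_{pq,r}(1) = (1_p ⊗ Δ_{q,r}(1))(Δ_{p,q}(1) ⊗ 1_r)` -/
  unit_weak₂ : ∀ p q r, (TensorProduct.map (comul p q) LinearMap.id)
      (comul (p * q) r (one (p * q * r)))
    = pair2 k (pair2 k (mul p) (mul q)) (mul r)
        ((TensorProduct.assoc k (H p) (H q) (H r)).symm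
          ((one p) ⊗ₜ[k] (comul q r (one (q * r)))))
        ((comul p q (one (p * q))) ⊗ₜ[k] (one r))
  /-- (3.4): `ε^t_p(h) = ε(1_{(1,e)}h) 1_{(2,p)}` -/
  εt_def : ∀ p (h : H 1), εt p h
    = sm2 k (counit ∘ₗ (mul 1).flip h) LinearMap.id (comul 1 p (one (1 * p)))
  /-- (3.5): `ε^s_p(h) = 1_{(1,p)} ε(h1_{(2,e)})` -/
  εs_def : ∀ p (h : H 1), εs p h
    = sm2 k (counit ∘ₗ mul 1 h) LinearMap.id
        ((TensorProduct.comm k (H p) (H 1)) (comul p 1 (one (p * 1))))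
  /-- (3.11): `ε̃^t_p(h) = 1_{(1,p)} ε(1_{(2,e)}h)` -/
  εt'_def : ∀ p (h : H 1), εt' p h
    = sm2 k (counit ∘ₗ (mul 1).flip h) LinearMap.id
        ((TensorProduct.comm k (H p) (H 1)) (comul p 1 (one (p * 1))))
  /-- (3.12): `ε̃^s_p(h) = ε(h1_{(1,e)}) 1_{(2,p)}` -/
  εs'_def : ∀ p (h : H 1), εs' p h
    = sm2 k (counit ∘ₗ mul 1 h) LinearMap.id (comul 1 p (one (1 * p)))
  /-- (3.6): `S = S * ε_t` -/
  S_conv_εt : ∀ p (h : H p),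
    mu2 k (mul p⁻¹) (antS p) (εt p⁻¹) (comul p 1 (castH k H (mul_one p).symm h)) = antS p h
  /-- (3.6): `S = ε_s * S` -/
  εs_conv_S : ∀ p (h : H p),
    mu2 k (mul p⁻¹) (εs p⁻¹) (antS p) (comul 1 p (castH k H (one_mul p).symm h)) = antS p h
  /-- (3.7): `S(h_{(1,p⁻¹)})(h_{(2,p)}g) = ε^s_p(h)g` -/
  antip₁ : ∀ p (h : H 1) (g : H p),
    mu2 k (mul p) ((castH k H (inv_inv p)) ∘ₗ antS p⁻¹) ((mul p).flip g)
        (comul p⁻¹ p (castH k H (inv_mul_cancel p).symm h))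
      = mul p (εs p h) g
  /-- (3.8): `h_{(1,p)}(S(h_{(2,p⁻¹)})g) = ε^t_p(h)g` -/
  antip₂ : ∀ p (h : H 1) (g : H p),
    mu2 k (mul p) LinearMap.id (((mul p).flip g) ∘ₗ (castH k H (inv_inv p)) ∘ₗ antS p⁻¹)
        (comul p p⁻¹ (castH k H (mul_inv_cancel p).symm h))
      = mul p (εt p h) g
  /-- (3.9): `(gh_{(1,p)})S(h_{(2,p⁻¹)}) = gε^t_p(h)` -/
  antip₃ : ∀ p (h : H 1) (g : H p),
    mu2 k (mul p) (mul p g) ((castH k H (inv_inv p)) ∘ₗ antS p⁻¹)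
        (comul p p⁻¹ (castH k H (mul_inv_cancel p).symm h))
      = mul p g (εt p h)
  /-- (3.10): `(gS(h_{(1,p⁻¹)}))h_{(2,p)} = gε^s_p(h)` -/
  antip₄ : ∀ p (h : H 1) (g : H p),
    mu2 k (mul p) ((mul p g) ∘ₗ (castH k H (inv_inv p)) ∘ₗ antS p⁻¹) LinearMap.id
        (comul p⁻¹ p (castH k H (inv_mul_cancel p).symm h))
      = mul p g (εs p h)

end WHQPaper

/-!
No associativity of the products is needed except under the counit (`ε((gh)l) = ε(g(hl))`): the
antipode enters only through (3.6)–(3.10), each of which carries its own free factor `g`.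

`ε^t_p = ε̃^s_p ∘ S_e`: from `S = ε_s * S` and (3.8), `ε(S(h) g) = ε(ε_t(h) g)` for all `g`, so
`ε̃^s_p(S h) = ε̃^s_p(ε_t h)`; and `ε̃^s_p ∘ ε^t_e = ε^t_p` by (3.1), coassociativity and the counit
axiom applied to `(Δ ⊗ id)Δ(1)`.

`ε^t_p = S_{p⁻¹} ∘ ε̃^t_{p⁻¹}`: expanding `S = S * ε_t` and using coassociativity together with
`ε_t(x₁) ε(x₂ h) = ε_t(x h)` turns `S(1₁) ε(1₂ h)` into `S(1₁) ε_t(1₂ h)`. By (3.9) with free factor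
`S(1₁)` and multiplicativity of `Δ` this is `(S(1₁)(1₂ h₁)) S(1₃ h₂)`; (3.7) contracts the first
two legs to `ε_s(1₁) h₁`, and `(ε_s ⊗ id)Δ(1) = Δ(1)`, a consequence of (3.2), leaves
`h₁ S(h₂) = ε_t(h)`.

The identities for `ε^s_p` are the mirror images.
-/

namespace WHQPaper

variable {k : Type*} [Field k]

section TensorMaps

variable {M N P Q M' N' P' Q' : Type*}
  [AddCommGroup M] [Module k M] [AddCommGroup N] [Module k N] [AddCommGroup P] [Module k P]
  [AddCommGroup Q] [Module k Q] [AddCommGroup M'] [Module k M'] [AddCommGroup N'] [Module k N']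
  [AddCommGroup P'] [Module k P'] [AddCommGroup Q'] [Module k Q']

@[simp] lemma sc2_tmul (f : M →ₗ[k] k) (g : N →ₗ[k] k) (a : M) (b : N) :
    sc2 k f g (a ⊗ₜ b) = f a * g b := rfl

@[simp] lemma sm2_tmul (f : M →ₗ[k] k) (g : N →ₗ[k] P) (a : M) (b : N) :
    sm2 k f g (a ⊗ₜ b) = f a • g b := rfl

@[simp] lemma mu2_tmul (m : M →ₗ[k] N →ₗ[k] P) (f : M' →ₗ[k] M) (g : N' →ₗ[k] N)
    (a : M') (b : N') : mu2 k m f g (a ⊗ₜ b) = m (f a) (g b) := rfl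

@[simp] lemma pair2_tmul (f : M →ₗ[k] P →ₗ[k] Q) (g : N →ₗ[k] P' →ₗ[k] Q')
    (a : M) (b : N) (c : P) (d : P') :
    pair2 k f g (a ⊗ₜ b) (c ⊗ₜ d) = f a c ⊗ₜ g b d := rfl

lemma pair2_apply_tmul (f : M →ₗ[k] P →ₗ[k] Q) (g : N →ₗ[k] P' →ₗ[k] Q') (t : M ⊗[k] N)
    (c : P) (d : P') : pair2 k f g t (c ⊗ₜ d) = map (f.flip c) (g.flip d) t := by
  induction t using TensorProduct.induction_on <;> simp_all

lemma pair2_tmul_apply (f : M →ₗ[k] P →ₗ[k] Q) (g : N →ₗ[k] P' →ₗ[k] Q') (a : M) (b : N)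
    (t : P ⊗[k] P') : pair2 k f g (a ⊗ₜ b) t = map (f a) (g b) t := by
  induction t using TensorProduct.induction_on <;> simp_all

lemma sm2_map (f : M →ₗ[k] k) (g : N →ₗ[k] P) (f' : M' →ₗ[k] M) (g' : N' →ₗ[k] N)
    (t : M' ⊗[k] N') : sm2 k f g (map f' g' t) = sm2 k (f ∘ₗ f') (g ∘ₗ g') t := by
  induction t using TensorProduct.induction_on <;> simp_all

lemma mu2_map (m : M →ₗ[k] N →ₗ[k] P) (f : M' →ₗ[k] M) (g : N' →ₗ[k] N)
    (f' : P' →ₗ[k] M') (g' : Q' →ₗ[k] N') (t : P' ⊗[k] Q') :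
    mu2 k m f g (map f' g' t) = mu2 k m (f ∘ₗ f') (g ∘ₗ g') t := by
  induction t using TensorProduct.induction_on <;> simp_all

lemma sm2_id_map (f : M →ₗ[k] k) (g : N' →ₗ[k] N) (t : M ⊗[k] N') :
    sm2 k f LinearMap.id (map LinearMap.id g t) = sm2 k f g t := by
  induction t using TensorProduct.induction_on <;> simp_all

lemma map_comp_left (f : M' →ₗ[k] P) (g : M →ₗ[k] M') (t : M ⊗[k] N) :
    map (f ∘ₗ g) (LinearMap.id : N →ₗ[k] N) t = map f LinearMap.id (map g LinearMap.id t) := by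
  rw [map_map, LinearMap.id_comp]

lemma map_comp_right (f : N' →ₗ[k] P) (g : N →ₗ[k] N') (t : M ⊗[k] N) :
    map (LinearMap.id : M →ₗ[k] M) (f ∘ₗ g) t = map LinearMap.id f (map LinearMap.id g t) := by
  rw [map_map, LinearMap.id_comp]

lemma apply_sm2 (f : M →ₗ[k] k) (g : N →ₗ[k] P) (L : P →ₗ[k] Q) (t : M ⊗[k] N) :
    L (sm2 k f g t) = sm2 k f (L ∘ₗ g) t := by
  induction t using TensorProduct.induction_on <;> simp_all

end TensorMaps

section Casts

variable {G : Type*} {H : G → Type*} [∀ p, AddCommGroup (H p)] [∀ p, Module k (H p)]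

@[simp] lemma castH_rfl {p : G} (e : p = p) : castH k H e = LinearMap.id := rfl

@[simp] lemma castH_castH {p q r : G} (e : p = q) (e' : q = r) (x : H p) :
    castH k H e' (castH k H e x) = castH k H (e.trans e') x := by
  subst e; rfl

end Casts

section Axioms

variable {G : Type*} [Group G] {H : G → Type*} [∀ p, AddCommGroup (H p)] [∀ p, Module k (H p)]

namespace GCWHQ

variable (A : GCWHQ k G H)

lemma castH_one {p q : G} (e : p = q) : castH k H e (A.one p) = A.one q := by
  subst e; rfl

lemma castH_mul {p q : G} (e : p = q) (x y : H p) :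
    castH k H e (A.mul p x y) = A.mul q (castH k H e x) (castH k H e y) := by
  subst e; rfl

lemma castH_mu2 {M N : Type*} [AddCommGroup M] [Module k M] [AddCommGroup N] [Module k N]
    {p q : G} (e : p = q) (f : M →ₗ[k] H p) (g : N →ₗ[k] H p) (t : M ⊗[k] N) :
    castH k H e (mu2 k (A.mul p) f g t)
      = mu2 k (A.mul q) (castH k H e ∘ₗ f) (castH k H e ∘ₗ g) t := by
  subst e; rfl

lemma antS_castH {p q : G} (e : p = q) (e' : p⁻¹ = q⁻¹) (x : H p) :
    A.antS q (castH k H e x) = castH k H e' (A.antS p x) := by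
  subst e; rfl

lemma castH_comp_εs {p q : G} (e : p = q) : castH k H e ∘ₗ A.εs p = A.εs q := by
  subst e; rfl

lemma castH_comp_εt {p q : G} (e : p = q) : castH k H e ∘ₗ A.εt p = A.εt q := by
  subst e; rfl

lemma map_castH_comul_left {p p' q : G} (e : p = p') (e' : p * q = p' * q) (x : H (p * q)) :
    map (castH k H e) LinearMap.id (A.comul p q x) = A.comul p' q (castH k H e' x) := by
  subst e; simp

lemma map_castH_comul_right {p q q' : G} (e : q = q') (e' : p * q = p * q') (x : H (p * q)) :
    map LinearMap.id (castH k H e) (A.comul p q x) = A.comul p q' (castH k H e' x) := by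
  subst e; simp

lemma mul_one_eq_id (p : G) : A.mul p (A.one p) = LinearMap.id :=
  LinearMap.ext (A.one_mul' p)

lemma coassoc_one (p q r : G) :
    TensorProduct.assoc k (H p) (H q) (H r) (map (A.comul p q) LinearMap.id
        (A.comul (p * q) r (A.one (p * q * r))))
      = map LinearMap.id (A.comul q r) (A.comul p (q * r) (A.one (p * (q * r)))) := by
  rw [A.coassoc, A.castH_one]

lemma lid_counit_comul {p : G} (x : H (1 * p)) :
    TensorProduct.lid k (H p) (map A.counit LinearMap.id (A.comul 1 p x))
      = castH k H (one_mul p) x := by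
  simpa using A.counit_left p (castH k H (one_mul p) x)

lemma rid_comul_counit {p : G} (x : H (p * 1)) :
    TensorProduct.rid k (H p) (map LinearMap.id A.counit (A.comul p 1 x))
      = castH k H (mul_one p) x := by
  simpa using A.counit_right p (castH k H (mul_one p) x)

lemma counit_mul_eq_sc2_comul_one (a b : H 1) :
    A.counit (A.mul 1 a b) = sc2 k (A.counit ∘ₗ (A.mul 1).flip b) (A.counit ∘ₗ A.mul 1 a)
      (A.comul 1 1 (A.one (1 * 1))) := by
  rw [← A.castH_one (one_mul 1).symm, ← A.eps_weak₂, A.mul_one']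

lemma counit_εs_mul (a g : H 1) : A.counit (A.mul 1 (A.εs 1 a) g) = A.counit (A.mul 1 a g) := by
  rw [A.εs_def, A.counit_mul_eq_sc2_comul_one a g]
  induction A.comul 1 1 (A.one (1 * 1)) using TensorProduct.induction_on <;> simp_all [mul_comm]

lemma counit_mul_εt (a g : H 1) : A.counit (A.mul 1 g (A.εt 1 a)) = A.counit (A.mul 1 g a) := by
  rw [A.εt_def, A.counit_mul_eq_sc2_comul_one g a]
  induction A.comul 1 1 (A.one (1 * 1)) using TensorProduct.induction_on <;> simp_all

lemma castH_antS_one_eq_mu2_εs (x : H 1) :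
    castH k H inv_one (A.antS 1 x) = mu2 k (A.mul 1) (A.εs 1) (castH k H inv_one ∘ₗ A.antS 1)
      (A.comul 1 1 (castH k H (one_mul 1).symm x)) := by
  rw [← A.εs_conv_S 1 x, A.castH_mu2, A.castH_comp_εs]

lemma castH_antS_one_eq_mu2_εt (x : H 1) :
    castH k H inv_one (A.antS 1 x) = mu2 k (A.mul 1) (castH k H inv_one ∘ₗ A.antS 1) (A.εt 1)
      (A.comul 1 1 (castH k H (mul_one 1).symm x)) := by
  rw [← A.S_conv_εt 1 x, A.castH_mu2, A.castH_comp_εt]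

lemma castH_antS_one_castH (b : H (1 : G)⁻¹) :
    castH k H inv_one (A.antS 1 (castH k H inv_one b)) = castH k H (inv_inv 1) (A.antS 1⁻¹ b) := by
  rw [A.antS_castH inv_one (congrArg Inv.inv inv_one), castH_castH]

lemma counit_antS_one_mul (x g : H 1) :
    A.counit (A.mul 1 (castH k H inv_one (A.antS 1 x)) g) = A.counit (A.mul 1 (A.εt 1 x) g) := by
  have hΔ : A.comul 1 1 (castH k H (one_mul 1).symm x) = map LinearMap.id (castH k H inv_one)
      (A.comul 1 1⁻¹ (castH k H (mul_inv_cancel 1).symm x)) := by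
    rw [A.map_castH_comul_right inv_one (by rw [inv_one]), castH_castH]
  rw [A.castH_antS_one_eq_mu2_εs, ← A.antip₂ 1 x g, hΔ, mu2_map]
  induction A.comul 1 1⁻¹ (castH k H (mul_inv_cancel 1).symm x) using TensorProduct.induction_on
    <;> simp_all [A.castH_antS_one_castH, A.eps_assoc, A.counit_εs_mul]

lemma counit_mul_antS_one (x g : H 1) :
    A.counit (A.mul 1 g (castH k H inv_one (A.antS 1 x))) = A.counit (A.mul 1 g (A.εs 1 x)) := by
  have hΔ : A.comul 1 1 (castH k H (mul_one 1).symm x) = map (castH k H inv_one) LinearMap.id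
      (A.comul 1⁻¹ 1 (castH k H (inv_mul_cancel 1).symm x)) := by
    rw [A.map_castH_comul_left inv_one (by rw [inv_one]), castH_castH]
  rw [A.castH_antS_one_eq_mu2_εt, ← A.antip₄ 1 x g, hΔ, mu2_map]
  induction A.comul 1⁻¹ 1 (castH k H (inv_mul_cancel 1).symm x) using TensorProduct.induction_on
    <;> simp_all [A.castH_antS_one_castH, ← A.eps_assoc, A.counit_mul_εt]

lemma εs'_εt (p : G) (x : H 1) : A.εs' p (A.εt 1 x) = A.εt p x := by
  set Ψ : H 1 ⊗[k] (H 1 ⊗[k] H p) →ₗ[k] H p :=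
    sm2 k (A.counit ∘ₗ (A.mul 1).flip x)
      ((TensorProduct.lid k (H p)).toLinearMap ∘ₗ map A.counit LinearMap.id) with hΨ
  have hunit : ∀ t : H 1 ⊗[k] H p, sm2 k (A.counit ∘ₗ A.mul 1 (A.εt 1 x)) LinearMap.id t
      = Ψ (TensorProduct.assoc k _ _ _ (pair2 k (pair2 k (A.mul 1) (A.mul 1)) (A.mul p)
          (A.comul 1 1 (A.one (1 * 1)) ⊗ₜ A.one p)
          ((TensorProduct.assoc k _ _ _).symm (A.one 1 ⊗ₜ t)))) := by
    intro t
    induction t using TensorProduct.induction_on with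
    | zero => simp
    | tmul c d =>
      simp only [sm2_tmul, LinearMap.comp_apply, TensorProduct.assoc_symm_tmul, A.εt_def]
      induction A.comul 1 1 (A.one (1 * 1)) using TensorProduct.induction_on <;>
        simp_all [A.mul_one', A.one_mul', smul_smul, TensorProduct.add_tmul, add_smul]
    | add s t hs ht => simp only [TensorProduct.tmul_add, map_add, hs, ht]
  have hcounit : (TensorProduct.lid k (H p)).toLinearMap ∘ₗ map A.counit LinearMap.id ∘ₗ
      A.comul 1 p = castH k H (one_mul p) := LinearMap.ext A.lid_counit_comul
  rw [A.εs'_def, hunit, ← A.unit_weak₁, A.coassoc_one, hΨ, sm2_map, LinearMap.comp_id,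
    LinearMap.comp_assoc, hcounit, ← sm2_id_map, A.map_castH_comul_right (one_mul p) (by simp),
    A.castH_one, ← A.εt_def]

lemma εt'_εs (p : G) (x : H 1) : A.εt' p (A.εs 1 x) = A.εs p x := by
  set f : H 1 ⊗[k] H 1 →ₗ[k] k := A.counit ∘ₗ A.mul 1 x ∘ₗ
    (TensorProduct.lid k (H 1)).toLinearMap ∘ₗ map A.counit LinearMap.id with hf
  set Ψ : H p ⊗[k] (H 1 ⊗[k] H 1) →ₗ[k] H p :=
    sm2 k f LinearMap.id ∘ₗ (TensorProduct.comm k _ _).toLinearMap with hΨ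
  have hunit : ∀ t : H p ⊗[k] H 1,
      sm2 k (A.counit ∘ₗ (A.mul 1).flip (A.εs 1 x)) LinearMap.id (TensorProduct.comm k _ _ t)
        = Ψ (TensorProduct.assoc k _ _ _ (pair2 k (pair2 k (A.mul p) (A.mul 1)) (A.mul 1)
          (t ⊗ₜ A.one 1)
          ((TensorProduct.assoc k _ _ _).symm (A.one p ⊗ₜ A.comul 1 1 (A.one (1 * 1)))))) := by
    intro t
    induction t using TensorProduct.induction_on with
    | zero => simp
    | tmul a b =>
      simp only [TensorProduct.comm_tmul, sm2_tmul, LinearMap.comp_apply, LinearMap.flip_apply,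
        A.εs_def]
      induction A.comul 1 1 (A.one (1 * 1)) using TensorProduct.induction_on <;>
        simp_all [A.mul_one', A.one_mul', mul_comm, TensorProduct.tmul_add, add_smul]
    | add s t hs ht => simp only [TensorProduct.add_tmul, map_add, LinearMap.add_apply, hs, ht]
  have hcounit : f ∘ₗ A.comul 1 1 = A.counit ∘ₗ A.mul 1 x ∘ₗ castH k H (one_mul 1) := by
    ext y; simp [hf, A.lid_counit_comul]
  have hcast : map (castH k H (one_mul 1)) LinearMap.id
      (TensorProduct.comm k _ _ (A.comul p (1 * 1) (A.one (p * (1 * 1)))))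
      = TensorProduct.comm k _ _ (A.comul p 1 (A.one (p * 1))) := by
    rw [map_comm, A.map_castH_comul_right (one_mul 1) (by simp), A.castH_one]
  rw [A.εt'_def, hunit, ← A.unit_weak₁, A.coassoc_one, hΨ, LinearMap.comp_apply,
    LinearEquiv.coe_coe, ← map_comm, sm2_map, LinearMap.comp_id, hcounit, A.εs_def, ← hcast,
    sm2_map, LinearMap.comp_id, LinearMap.comp_assoc]

theorem εt_eq_εs'_comp_antS (p : G) :
    A.εt p = A.εs' p ∘ₗ castH k H inv_one ∘ₗ A.antS 1 := by
  ext x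
  have hε : A.counit ∘ₗ A.mul 1 (castH k H inv_one (A.antS 1 x))
      = A.counit ∘ₗ A.mul 1 (A.εt 1 x) := LinearMap.ext (A.counit_antS_one_mul x)
  rw [LinearMap.comp_apply, LinearMap.comp_apply, A.εs'_def, hε, ← A.εs'_def, A.εs'_εt]

theorem εs_eq_εt'_comp_antS (p : G) :
    A.εs p = A.εt' p ∘ₗ castH k H inv_one ∘ₗ A.antS 1 := by
  ext x
  have hε : A.counit ∘ₗ (A.mul 1).flip (castH k H inv_one (A.antS 1 x))
      = A.counit ∘ₗ (A.mul 1).flip (A.εs 1 x) := LinearMap.ext (A.counit_mul_antS_one x)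
  rw [LinearMap.comp_apply, LinearMap.comp_apply, A.εt'_def, hε, ← A.εt'_def, A.εt'_εs]

lemma sm2_counit_mul_εt_comul (p : G) (h : H 1) (x : H (1 * 1)) :
    sm2 k (A.counit ∘ₗ (A.mul 1).flip h) (A.εt p) (TensorProduct.comm k _ _ (A.comul 1 1 x))
      = A.εt p (A.mul 1 (castH k H (one_mul 1) x) h) := by
  obtain ⟨X, hX⟩ := exists_finset (A.comul 1 1 x)
  obtain ⟨U, hU⟩ := exists_finset (A.comul 1 p (A.one (1 * p)))
  have hε : ∀ c : H 1, A.counit (A.mul 1 c (A.mul 1 (castH k H (one_mul 1) x) h))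
      = ∑ i ∈ X, A.counit (A.mul 1 c i.1) * A.counit (A.mul 1 i.2 h) := by
    intro c
    rw [← A.eps_assoc, A.eps_weak₁, castH_castH, castH_rfl, LinearMap.id_apply, hX]
    simp
  simp only [A.εt_def, hU, hX, map_sum, TensorProduct.comm_tmul, sm2_tmul, LinearMap.comp_apply,
    LinearMap.flip_apply, hε, Finset.smul_sum, Finset.sum_smul, smul_smul]
  rw [Finset.sum_comm]
  simp only [mul_comm]

lemma sm2_counit_mul_εs_comul (p : G) (h : H 1) (x : H (1 * 1)) :
    sm2 k (A.counit ∘ₗ A.mul 1 h) (A.εs p) (A.comul 1 1 x)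
      = A.εs p (A.mul 1 h (castH k H (one_mul 1) x)) := by
  obtain ⟨X, hX⟩ := exists_finset (A.comul 1 1 x)
  obtain ⟨U, hU⟩ := exists_finset (TensorProduct.comm k _ _ (A.comul p 1 (A.one (p * 1))))
  have hε : ∀ d : H 1, A.counit (A.mul 1 (A.mul 1 h (castH k H (one_mul 1) x)) d)
      = ∑ i ∈ X, A.counit (A.mul 1 h i.1) * A.counit (A.mul 1 i.2 d) := by
    intro d
    rw [A.eps_weak₁, castH_castH, castH_rfl, LinearMap.id_apply, hX]
    simp
  simp only [A.εs_def, hU, hX, map_sum, sm2_tmul, LinearMap.comp_apply, hε, Finset.smul_sum,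
    Finset.sum_smul, smul_smul]
  rw [Finset.sum_comm]

lemma map_εs_comul_one (p q : G) :
    map (A.εs p) LinearMap.id (A.comul 1 q (A.one (1 * q))) = A.comul p q (A.one (p * q)) := by
  set Λ : (H p ⊗[k] H 1) ⊗[k] H q →ₗ[k] H p ⊗[k] H q :=
    map ((TensorProduct.rid k (H p)).toLinearMap ∘ₗ map LinearMap.id A.counit) LinearMap.id
    with hΛ
  have hunit : ∀ s : H 1 ⊗[k] H q, map (A.εs p) LinearMap.id s
      = Λ (pair2 k (pair2 k (A.mul p) (A.mul 1)) (A.mul q)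
          ((TensorProduct.assoc k _ _ _).symm (A.one p ⊗ₜ s))
          (A.comul p 1 (A.one (p * 1)) ⊗ₜ A.one q)) := by
    intro s
    induction s using TensorProduct.induction_on with
    | zero => simp
    | tmul b c =>
      simp only [map_tmul, LinearMap.id_apply, TensorProduct.assoc_symm_tmul, A.εs_def]
      induction A.comul p 1 (A.one (p * 1)) using TensorProduct.induction_on <;>
        simp_all [A.mul_one', A.one_mul', TensorProduct.add_tmul]
    | add s t hs ht => simp only [TensorProduct.tmul_add, map_add, LinearMap.add_apply, hs, ht]
  have hcounit : (TensorProduct.rid k (H p)).toLinearMap ∘ₗ map LinearMap.id A.counit ∘ₗ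
      A.comul p 1 = castH k H (mul_one p) := LinearMap.ext A.rid_comul_counit
  rw [hunit, ← A.unit_weak₂, hΛ, map_map, LinearMap.comp_assoc, hcounit, LinearMap.comp_id,
    A.map_castH_comul_left (mul_one p) (by simp), A.castH_one]

lemma map_εt_comul_one (p q : G) :
    map LinearMap.id (A.εt p) (A.comul q 1 (A.one (q * 1))) = A.comul q p (A.one (q * p)) := by
  set Λ : (H q ⊗[k] H 1) ⊗[k] H p →ₗ[k] H q ⊗[k] H p :=
    map ((TensorProduct.rid k (H q)).toLinearMap ∘ₗ map LinearMap.id A.counit) LinearMap.id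
    with hΛ
  have hunit : ∀ s : H q ⊗[k] H 1, map LinearMap.id (A.εt p) s
      = Λ (pair2 k (pair2 k (A.mul q) (A.mul 1)) (A.mul p)
          ((TensorProduct.assoc k _ _ _).symm (A.one q ⊗ₜ A.comul 1 p (A.one (1 * p))))
          (s ⊗ₜ A.one p)) := by
    intro s
    induction s using TensorProduct.induction_on with
    | zero => simp
    | tmul b c =>
      simp only [map_tmul, LinearMap.id_apply, A.εt_def]
      induction A.comul 1 p (A.one (1 * p)) using TensorProduct.induction_on <;>
        simp_all [A.mul_one', A.one_mul', TensorProduct.smul_tmul', TensorProduct.tmul_add]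
    | add s t hs ht => simp only [TensorProduct.add_tmul, map_add, hs, ht]
  have hcounit : (TensorProduct.rid k (H q)).toLinearMap ∘ₗ map LinearMap.id A.counit ∘ₗ
      A.comul q 1 = castH k H (mul_one q) := LinearMap.ext A.rid_comul_counit
  rw [hunit, ← A.unit_weak₂, hΛ, map_map, LinearMap.comp_assoc, hcounit, LinearMap.comp_id,
    A.map_castH_comul_left (mul_one q) (by simp), A.castH_one]

lemma mu2_comul_antS_eq_εt (p : G) (x : H 1) :
    mu2 k (A.mul p) LinearMap.id (castH k H (inv_inv p) ∘ₗ A.antS p⁻¹)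
      (A.comul p p⁻¹ (castH k H (mul_inv_cancel p).symm x)) = A.εt p x := by
  simpa [A.mul_one_eq_id] using A.antip₃ p x (A.one p)

lemma mu2_comul_antS_eq_εs (p : G) (x : H 1) :
    mu2 k (A.mul p) (castH k H (inv_inv p) ∘ₗ A.antS p⁻¹) LinearMap.id
      (A.comul p⁻¹ p (castH k H (inv_mul_cancel p).symm x)) = A.εs p x := by
  simpa [A.mul_one_eq_id] using A.antip₄ p x (A.one p)

lemma antS_εt'_eq_mu2 (p : G) (h : H 1) :
    castH k H (inv_inv p) (A.antS p⁻¹ (A.εt' p⁻¹ h))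
      = mu2 k (A.mul p) (castH k H (inv_inv p) ∘ₗ A.antS p⁻¹) (A.εt p ∘ₗ (A.mul 1).flip h)
          (A.comul p⁻¹ 1 (A.one (p⁻¹ * 1))) := by
  set S := castH k H (inv_inv p) ∘ₗ A.antS p⁻¹ with hS
  have hSεt : ∀ y, S y = mu2 k (A.mul p) S (A.εt p)
      (A.comul p⁻¹ 1 (castH k H (mul_one p⁻¹).symm y)) := by
    intro y
    rw [hS, LinearMap.comp_apply, ← A.S_conv_εt, A.castH_mu2, A.castH_comp_εt]
  set Φ : H p⁻¹ ⊗[k] (H 1 ⊗[k] H 1) →ₗ[k] H p :=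
    mu2 k (A.mul p) S (sm2 k (A.counit ∘ₗ (A.mul 1).flip h) (A.εt p) ∘ₗ
      (TensorProduct.comm k _ _).toLinearMap) with hΦ
  have hsplit : ∀ t : H p⁻¹ ⊗[k] H 1,
      sm2 k (A.counit ∘ₗ (A.mul 1).flip h) S (TensorProduct.comm k _ _ t)
        = Φ (TensorProduct.assoc k _ _ _ (map (A.comul p⁻¹ 1) LinearMap.id
            (map (castH k H (mul_one p⁻¹).symm) LinearMap.id t))) := by
    intro t
    induction t using TensorProduct.induction_on with
    | zero => simp
    | tmul a c =>
      simp only [TensorProduct.comm_tmul, sm2_tmul, map_tmul, LinearMap.comp_apply,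
        LinearMap.id_apply, hSεt a]
      induction A.comul p⁻¹ 1 (castH k H (mul_one p⁻¹).symm a) using
        TensorProduct.induction_on <;> simp_all [TensorProduct.add_tmul, smul_add]
    | add s t hs ht => simp only [map_add, hs, ht]
  have hεt : sm2 k (A.counit ∘ₗ (A.mul 1).flip h) (A.εt p) ∘ₗ
      (TensorProduct.comm k _ _).toLinearMap ∘ₗ A.comul 1 1
      = A.εt p ∘ₗ (A.mul 1).flip h ∘ₗ castH k H (one_mul 1) := by
    ext x; simp [A.sm2_counit_mul_εt_comul]
  rw [A.εt'_def, apply_sm2, apply_sm2, LinearMap.comp_id, ← hS, hsplit,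
    A.map_castH_comul_left (mul_one p⁻¹).symm (by simp), A.castH_one, A.coassoc_one, hΦ,
    mu2_map, LinearMap.comp_id, LinearMap.comp_assoc, hεt, ← LinearMap.comp_assoc,
    ← LinearMap.comp_id S, ← mu2_map, A.map_castH_comul_right (one_mul 1) (by simp), A.castH_one,
    LinearMap.comp_id]

lemma mu2_antS_flip_comp_comul (p : G) (g : H p) :
    mu2 k (A.mul p) (castH k H (inv_inv p) ∘ₗ A.antS p⁻¹) ((A.mul p).flip g) ∘ₗ A.comul p⁻¹ p
      = (A.mul p).flip g ∘ₗ A.εs p ∘ₗ castH k H (inv_mul_cancel p) := by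
  ext y; simpa using A.antip₁ p (castH k H (inv_mul_cancel p) y) g

lemma mu2_mu2_antS_comul_comul_one (p : G) (u : H p) (v : H p⁻¹) :
    mu2 k (A.mul p) (mu2 k (A.mul p) (castH k H (inv_inv p) ∘ₗ A.antS p⁻¹) LinearMap.id)
        (castH k H (inv_inv p) ∘ₗ A.antS p⁻¹) ((TensorProduct.assoc k _ _ _).symm
          (map LinearMap.id (map ((A.mul p).flip u) ((A.mul p⁻¹).flip v))
            (map LinearMap.id (A.comul p p⁻¹) (A.comul p⁻¹ (p * p⁻¹) (A.one (p⁻¹ * (p * p⁻¹)))))))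
      = mu2 k (A.mul p) ((A.mul p).flip u) ((castH k H (inv_inv p) ∘ₗ A.antS p⁻¹) ∘ₗ
          (A.mul p⁻¹).flip v) (A.comul p p⁻¹ (A.one (p * p⁻¹))) := by
  set S := castH k H (inv_inv p) ∘ₗ A.antS p⁻¹
  have hmu2 : mu2 k (A.mul p) S LinearMap.id ∘ₗ map LinearMap.id ((A.mul p).flip u)
      = mu2 k (A.mul p) S ((A.mul p).flip u) := by
    ext; simp
  rw [← A.coassoc_one, ← map_map_assoc_symm, LinearEquiv.symm_apply_apply, map_map, mu2_map,
    ← LinearMap.comp_assoc, hmu2, A.mu2_antS_flip_comp_comul, LinearMap.comp_id]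
  have hV : map (A.εs p ∘ₗ castH k H (inv_mul_cancel p)) LinearMap.id
      (A.comul (p⁻¹ * p) p⁻¹ (A.one (p⁻¹ * p * p⁻¹))) = A.comul p p⁻¹ (A.one (p * p⁻¹)) := by
    rw [map_comp_left, A.map_castH_comul_left (inv_mul_cancel p) (by simp), A.castH_one,
      A.map_εs_comul_one]
  rw [← hV, mu2_map, LinearMap.comp_id, LinearMap.comp_assoc]

lemma mu2_antS_εt_comul_one (p : G) (h : H 1) :
    mu2 k (A.mul p) (castH k H (inv_inv p) ∘ₗ A.antS p⁻¹) (A.εt p ∘ₗ (A.mul 1).flip h)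
      (A.comul p⁻¹ 1 (A.one (p⁻¹ * 1))) = A.εt p h := by
  set S := castH k H (inv_inv p) ∘ₗ A.antS p⁻¹
  set Dh := A.comul p p⁻¹ (castH k H (mul_inv_cancel p).symm h)
  set Φ := mu2 k (A.mul p) (mu2 k (A.mul p) S LinearMap.id) S
  have hΦ : ∀ a r, Φ ((TensorProduct.assoc k _ _ _).symm (a ⊗ₜ r))
      = mu2 k (A.mul p) (A.mul p (S a)) S r := by
    intro a r
    induction r using TensorProduct.induction_on <;> simp_all [Φ, TensorProduct.tmul_add]
  have hantip : ∀ t : H p⁻¹ ⊗[k] H 1, mu2 k (A.mul p) S (A.εt p ∘ₗ (A.mul 1).flip h) t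
      = Φ ((TensorProduct.assoc k _ _ _).symm
          (map LinearMap.id ((pair2 k (A.mul p) (A.mul p⁻¹)).flip Dh) (map LinearMap.id
            (A.comul p p⁻¹) (map LinearMap.id (castH k H (mul_inv_cancel p).symm) t)))) := by
    intro t
    induction t using TensorProduct.induction_on with
    | zero => simp
    | tmul a c =>
      simp only [mu2_tmul, LinearMap.comp_apply, LinearMap.flip_apply, map_tmul,
        LinearMap.id_apply]
      rw [← A.antip₃, A.castH_mul, A.comul_mul, hΦ]
    | add s t hs ht => simp only [map_add, hs, ht]
  have hcomul : ∀ d, Φ ((TensorProduct.assoc k _ _ _).symm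
      (map LinearMap.id ((pair2 k (A.mul p) (A.mul p⁻¹)).flip d) (map LinearMap.id
        (A.comul p p⁻¹) (A.comul p⁻¹ (p * p⁻¹) (A.one (p⁻¹ * (p * p⁻¹)))))))
      = mu2 k (A.mul p) LinearMap.id S
          (pair2 k (A.mul p) (A.mul p⁻¹) (A.comul p p⁻¹ (A.one (p * p⁻¹))) d) := by
    intro d
    induction d using TensorProduct.induction_on with
    | zero => simp
    | tmul u v =>
      have hflip : (pair2 k (A.mul p) (A.mul p⁻¹)).flip (u ⊗ₜ v)
          = map ((A.mul p).flip u) ((A.mul p⁻¹).flip v) := by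
        ext; simp [pair2_apply_tmul]
      rw [hflip, A.mu2_mu2_antS_comul_comul_one, pair2_apply_tmul, mu2_map, LinearMap.id_comp]
    | add d d' hd hd' => simp only [map_add, map_add_right, LinearMap.add_apply, hd, hd']
  rw [hantip, A.map_castH_comul_right (mul_inv_cancel p).symm (by simp), A.castH_one, hcomul,
    ← A.comul_mul, A.one_mul', A.mu2_comul_antS_eq_εt]

theorem εt_eq_antS_comp_εt' (p : G) :
    A.εt p = castH k H (inv_inv p) ∘ₗ A.antS p⁻¹ ∘ₗ A.εt' p⁻¹ := by
  ext h
  rw [LinearMap.comp_apply, LinearMap.comp_apply, A.antS_εt'_eq_mu2, A.mu2_antS_εt_comul_one]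

lemma antS_εs'_eq_mu2 (p : G) (h : H 1) :
    castH k H (inv_inv p) (A.antS p⁻¹ (A.εs' p⁻¹ h))
      = mu2 k (A.mul p) (A.εs p ∘ₗ A.mul 1 h) (castH k H (inv_inv p) ∘ₗ A.antS p⁻¹)
          (A.comul 1 p⁻¹ (A.one (1 * p⁻¹))) := by
  set S := castH k H (inv_inv p) ∘ₗ A.antS p⁻¹ with hS
  have hSεs : ∀ y, S y = mu2 k (A.mul p) (A.εs p) S
      (A.comul 1 p⁻¹ (castH k H (one_mul p⁻¹).symm y)) := by
    intro y
    rw [hS, LinearMap.comp_apply, ← A.εs_conv_S, A.castH_mu2, A.castH_comp_εs]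
  set Φ : (H 1 ⊗[k] H 1) ⊗[k] H p⁻¹ →ₗ[k] H p :=
    mu2 k (A.mul p) (sm2 k (A.counit ∘ₗ A.mul 1 h) (A.εs p)) S with hΦ
  have hsplit : ∀ t : H 1 ⊗[k] H p⁻¹, sm2 k (A.counit ∘ₗ A.mul 1 h) S t
      = Φ ((TensorProduct.assoc k _ _ _).symm (map LinearMap.id (A.comul 1 p⁻¹)
          (map LinearMap.id (castH k H (one_mul p⁻¹).symm) t))) := by
    intro t
    induction t using TensorProduct.induction_on with
    | zero => simp
    | tmul c a =>
      simp only [sm2_tmul, map_tmul, LinearMap.comp_apply, LinearMap.id_apply, hSεs a]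
      induction A.comul 1 p⁻¹ (castH k H (one_mul p⁻¹).symm a) using
        TensorProduct.induction_on <;> simp_all [TensorProduct.tmul_add, smul_add]
    | add s t hs ht => simp only [map_add, hs, ht]
  have hεs : sm2 k (A.counit ∘ₗ A.mul 1 h) (A.εs p) ∘ₗ A.comul 1 1
      = (A.εs p ∘ₗ A.mul 1 h) ∘ₗ castH k H (one_mul 1) := by
    ext x; simp [A.sm2_counit_mul_εs_comul]
  rw [A.εs'_def, apply_sm2, apply_sm2, LinearMap.comp_id, ← hS, hsplit,
    A.map_castH_comul_right (one_mul p⁻¹).symm (by simp), A.castH_one, ← A.coassoc_one,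
    LinearEquiv.symm_apply_apply, hΦ, mu2_map, LinearMap.comp_id, hεs, ← LinearMap.comp_id S,
    ← mu2_map _ _ _ (castH k H (one_mul 1)), A.map_castH_comul_left (one_mul 1) (by simp),
    A.castH_one, LinearMap.comp_id]

lemma mu2_mul_antS_comp_comul (p : G) (g : H p) :
    mu2 k (A.mul p) (A.mul p g) (castH k H (inv_inv p) ∘ₗ A.antS p⁻¹) ∘ₗ A.comul p p⁻¹
      = A.mul p g ∘ₗ A.εt p ∘ₗ castH k H (mul_inv_cancel p) := by
  ext y; simpa using A.antip₃ p (castH k H (mul_inv_cancel p) y) g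

lemma mu2_antS_mu2_comul_comul_one (p : G) (u : H p⁻¹) (v : H p) :
    mu2 k (A.mul p) (castH k H (inv_inv p) ∘ₗ A.antS p⁻¹)
        (mu2 k (A.mul p) LinearMap.id (castH k H (inv_inv p) ∘ₗ A.antS p⁻¹))
        (TensorProduct.assoc k _ _ _ (map (map (A.mul p⁻¹ u) (A.mul p v)) LinearMap.id
          (map (A.comul p⁻¹ p) LinearMap.id (A.comul (p⁻¹ * p) p⁻¹ (A.one (p⁻¹ * p * p⁻¹))))))
      = mu2 k (A.mul p) ((castH k H (inv_inv p) ∘ₗ A.antS p⁻¹) ∘ₗ A.mul p⁻¹ u) (A.mul p v)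
          (A.comul p⁻¹ p (A.one (p⁻¹ * p))) := by
  set S := castH k H (inv_inv p) ∘ₗ A.antS p⁻¹
  have hmu2 : mu2 k (A.mul p) LinearMap.id S ∘ₗ map (A.mul p v) LinearMap.id
      = mu2 k (A.mul p) (A.mul p v) S := by
    ext; simp
  rw [← map_map_assoc, A.coassoc_one, map_map, mu2_map, ← LinearMap.comp_assoc (A.comul p p⁻¹),
    hmu2, A.mu2_mul_antS_comp_comul, LinearMap.comp_id]
  have hV : map LinearMap.id (A.εt p ∘ₗ castH k H (mul_inv_cancel p))
      (A.comul p⁻¹ (p * p⁻¹) (A.one (p⁻¹ * (p * p⁻¹)))) = A.comul p⁻¹ p (A.one (p⁻¹ * p)) := by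
    rw [map_comp_right, A.map_castH_comul_right (mul_inv_cancel p) (by simp), A.castH_one,
      A.map_εt_comul_one]
  rw [← hV, mu2_map, LinearMap.comp_id, LinearMap.comp_assoc]

lemma mu2_εs_antS_comul_one (p : G) (h : H 1) :
    mu2 k (A.mul p) (A.εs p ∘ₗ A.mul 1 h) (castH k H (inv_inv p) ∘ₗ A.antS p⁻¹)
      (A.comul 1 p⁻¹ (A.one (1 * p⁻¹))) = A.εs p h := by
  set S := castH k H (inv_inv p) ∘ₗ A.antS p⁻¹
  set Dh := A.comul p⁻¹ p (castH k H (inv_mul_cancel p).symm h)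
  set Φ := mu2 k (A.mul p) S (mu2 k (A.mul p) LinearMap.id S)
  have hΦ : ∀ r a, Φ (TensorProduct.assoc k _ _ _ (r ⊗ₜ a))
      = mu2 k (A.mul p) S ((A.mul p).flip (S a)) r := by
    intro r a
    induction r using TensorProduct.induction_on <;> simp_all [Φ, TensorProduct.add_tmul]
  have hantip : ∀ t : H 1 ⊗[k] H p⁻¹, mu2 k (A.mul p) (A.εs p ∘ₗ A.mul 1 h) S t
      = Φ (TensorProduct.assoc k _ _ _ (map (pair2 k (A.mul p⁻¹) (A.mul p) Dh) LinearMap.id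
          (map (A.comul p⁻¹ p) LinearMap.id
            (map (castH k H (inv_mul_cancel p).symm) LinearMap.id t)))) := by
    intro t
    induction t using TensorProduct.induction_on with
    | zero => simp
    | tmul c a =>
      simp only [mu2_tmul, LinearMap.comp_apply, map_tmul, LinearMap.id_apply]
      rw [← A.antip₁, A.castH_mul, A.comul_mul, hΦ]
    | add s t hs ht => simp only [map_add, hs, ht]
  have hcomul : ∀ d, Φ (TensorProduct.assoc k _ _ _ (map (pair2 k (A.mul p⁻¹) (A.mul p) d)
      LinearMap.id (map (A.comul p⁻¹ p) LinearMap.id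
        (A.comul (p⁻¹ * p) p⁻¹ (A.one (p⁻¹ * p * p⁻¹))))))
      = mu2 k (A.mul p) S LinearMap.id
          (pair2 k (A.mul p⁻¹) (A.mul p) d (A.comul p⁻¹ p (A.one (p⁻¹ * p)))) := by
    intro d
    induction d using TensorProduct.induction_on with
    | zero => simp
    | tmul u v =>
      have hpair : pair2 k (A.mul p⁻¹) (A.mul p) (u ⊗ₜ v) = map (A.mul p⁻¹ u) (A.mul p v) :=
        LinearMap.ext (pair2_tmul_apply _ _ u v)
      rw [hpair, A.mu2_antS_mu2_comul_comul_one, mu2_map, LinearMap.id_comp]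
    | add d d' hd hd' => simp only [map_add, map_add_left, LinearMap.add_apply, hd, hd']
  rw [hantip, A.map_castH_comul_left (inv_mul_cancel p).symm (by simp), A.castH_one, hcomul,
    ← A.comul_mul, A.mul_one', A.mu2_comul_antS_eq_εs]

theorem εs_eq_antS_comp_εs' (p : G) :
    A.εs p = castH k H (inv_inv p) ∘ₗ A.antS p⁻¹ ∘ₗ A.εs' p⁻¹ := by
  ext h
  rw [LinearMap.comp_apply, LinearMap.comp_apply, A.antS_εs'_eq_mu2, A.mu2_εs_antS_comul_one]

end GCWHQ

end Axioms

end WHQPaper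

open WHQPaper in
/-- In a group-cograded weak Hopf quasigroup, for all `p ∈ G` one has
`ε^t_p = ε̃^s_p ∘ S_e = S_{p⁻¹} ∘ ε̃^t_{p⁻¹}` and
`ε^s_p = ε̃^t_p ∘ S_e = S_{p⁻¹} ∘ ε̃^s_{p⁻¹}` as maps `H_e → H_p`. -/
theorem counital_maps_antipode {k G : Type*} [Field k] [Group G] {H : G → Type*}
    [∀ p, AddCommGroup (H p)] [∀ p, Module k (H p)] (A : GCWHQ k G H) (p : G) :
    (A.εt p = A.εs' p ∘ₗ castH k H inv_one ∘ₗ A.antS 1 ∧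
     A.εt p = castH k H (inv_inv p) ∘ₗ A.antS p⁻¹ ∘ₗ A.εt' p⁻¹) ∧
    (A.εs p = A.εt' p ∘ₗ castH k H inv_one ∘ₗ A.antS 1 ∧
     A.εs p = castH k H (inv_inv p) ∘ₗ A.antS p⁻¹ ∘ₗ A.εs' p⁻¹) :=
  ⟨⟨A.εt_eq_εs'_comp_antS p, A.εt_eq_antS_comp_εt' p⟩,
    ⟨A.εs_eq_εt'_comp_antS p, A.εs_eq_antS_comp_εs' p⟩⟩
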